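/- arXiv:2006.00121 — 3 statements merged into one kernel-verified Lean document; each statement's English description precedes it below -/
import Mathlib

section
/- Let n₁ < n₂ < ⋯ < n_k be distinct positive integers with k ≥ 3, and define F : ℝ → ℝ by F(x) = ((k−1)·n₁n₂⋯n_k/2)·Σ_{r=1}^k |1 − n_r x|·(1 − n_r x)^{k−3} / ∏_{j≠r}(n_j − n_r). Then F is a probability density function supported on [1/n_k, 1/n₁]: namely F(x) ≥ 0 for all x ∈ ℝ, F(x) = 0 for all x ∉ [1/n_k, 1/n₁], and ∫_ℝ F(t) dt = 1. -/
open Finset MeasureTheory Polynomial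

/-!
Write `Δ_T f = ∑_{t ∈ T} f t / ∏_{u ∈ T, u ≠ t} (u - t)` for the node set `T = {n₁, …, n_k}`.
Then `F x = ((k-1) ∏ nⱼ / 2) · Δ_T [t ↦ |1 - t x| (1 - t x)^(k-3)]`, and `Δ_T` kills polynomials
of degree `≤ k - 2`.

* Since `|u| u^(k-3) = 2 u₊^(k-2) - u^(k-2)`, for `x > 0` the bracket is
  `2 x^(k-2) Δ_T [t ↦ (1/x - t)₊^(k-2)]`, a B-spline value, nonnegative by induction on `#T`
  through `(b - a) Δ_T f = Δ_{T∖b} f - Δ_{T∖a} f`.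
* If `1 - t x` has the same sign at all nodes, the bracket is `Δ_T` of a polynomial, hence `0`.
* `x ↦ Δ_T [t ↦ |1 - t x| (1 - t x)^(k-2) / t]` has derivative `-(k-1)` times the bracket, and at
  `x = 1/n_k`, `x = 1/n₁` it equals `±Δ_T [t ↦ (1 - t x)^(k-1) / t] = ±1 / ∏ nⱼ`: add the node `0`
  and use that `Δ_{T ∪ {0}}` kills `(1 - t x)^(k-1)`.
-/

section DividedDifference

variable {K : Type*} [Field K] [DecidableEq K]

-- The usual divided difference times `(-1)^(#T - 1)`, matching the denominators of the density.
noncomputable def divDiff (T : Finset K) (f : K → K) : K :=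
  ∑ t ∈ T, f t / ∏ u ∈ T.erase t, (u - t)

theorem divDiff_congr {T : Finset K} {f g : K → K} (h : ∀ t ∈ T, f t = g t) :
    divDiff T f = divDiff T g :=
  sum_congr rfl fun t ht => by rw [h t ht]

theorem divDiff_const_mul (T : Finset K) (c : K) (f : K → K) :
    divDiff T (fun t => c * f t) = c * divDiff T f := by
  simp only [divDiff, mul_sum, mul_div_assoc]

theorem divDiff_sub (T : Finset K) (f g : K → K) :
    divDiff T (fun t => f t - g t) = divDiff T f - divDiff T g := by
  simp only [divDiff, sub_div, sum_sub_distrib]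

theorem divDiff_singleton (a : K) (f : K → K) : divDiff {a} f = f a := by
  simp [divDiff]

theorem divDiff_image {ι : Type*} [DecidableEq ι] (s : Finset ι) {v : ι → K}
    (hv : Function.Injective v) (f : K → K) :
    divDiff (s.image v) f = ∑ i ∈ s, f (v i) / ∏ j ∈ s.erase i, (v j - v i) := by
  rw [divDiff, sum_image hv.injOn]
  refine sum_congr rfl fun i _ => ?_
  rw [← image_erase hv, prod_image hv.injOn]

theorem divDiff_insert {T : Finset K} {a : K} (ha : a ∉ T) (f : K → K) :
    divDiff (insert a T) f = f a / ∏ u ∈ T, (u - a) + divDiff T (fun t => f t / (a - t)) := by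
  rw [divDiff, sum_insert ha, erase_insert ha]
  congr 1
  refine sum_congr rfl fun t ht => ?_
  have hta : t ≠ a := fun h => ha (h ▸ ht)
  rw [erase_insert_of_ne hta.symm, prod_insert fun h => ha (mem_of_mem_erase h),
    div_mul_eq_div_div]

theorem divDiff_sub_mul {T : Finset K} {a : K} (ha : a ∈ T) (s : K) (f : K → K) :
    divDiff T (fun t => (s - t) * f t) = (s - a) * divDiff T f + divDiff (T.erase a) f := by
  have hsplit : ∀ t ∈ T, (s - t) * f t / ∏ u ∈ T.erase t, (u - t) =
      (s - a) * (f t / ∏ u ∈ T.erase t, (u - t)) + (a - t) * f t / ∏ u ∈ T.erase t, (u - t) :=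
    fun t _ => by ring
  rw [divDiff, sum_congr rfl hsplit, sum_add_distrib, ← mul_sum]
  congr 1
  rw [← add_sum_erase _ _ ha, sub_self, zero_mul, zero_div, zero_add]
  refine sum_congr rfl fun t ht => ?_
  have hat : a ∈ T.erase t := mem_erase.2 ⟨(ne_of_mem_erase ht).symm, ha⟩
  rw [erase_right_comm, ← mul_prod_erase _ _ hat,
    mul_div_mul_left _ _ (sub_ne_zero.2 (ne_of_mem_erase ht).symm)]

theorem sub_mul_divDiff {T : Finset K} {a b : K} (ha : a ∈ T) (hb : b ∈ T) (f : K → K) :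
    (b - a) * divDiff T f = divDiff (T.erase b) f - divDiff (T.erase a) f := by
  linear_combination divDiff_sub_mul hb 0 f - divDiff_sub_mul ha 0 f

theorem divDiff_eval_eq_zero {T : Finset K} {P : K[X]} (hP : P.natDegree + 1 < #T) :
    divDiff T (fun t => P.eval t) = 0 := by
  have hsign : divDiff T (fun t => P.eval t) =
      (-1) ^ (#T - 1) * ∑ t ∈ T, P.eval t / ∏ u ∈ T.erase t, (t - u) := by
    rw [divDiff, mul_sum]
    refine sum_congr rfl fun t ht => ?_
    have : ∏ u ∈ T.erase t, (u - t) = (-1) ^ (#T - 1) * ∏ u ∈ T.erase t, (t - u) := by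
      rw [← card_erase_of_mem ht, ← prod_neg]
      simp only [neg_sub]
    rw [this, mul_comm, ← div_div, div_eq_mul_inv _ ((-1) ^ _), ← inv_pow, inv_neg_one,
      mul_comm]
  have hcoeff := Lagrange.coeff_eq_sum (s := T) (v := id) (Set.injOn_id _)
    (degree_le_natDegree.trans_lt (by exact_mod_cast (by omega : P.natDegree < #T)))
  simp only [id] at hcoeff
  rw [hsign, ← hcoeff, coeff_eq_zero_of_natDegree_lt (by omega), mul_zero]

theorem divDiff_sub_mul_pow_eq_zero {T : Finset K} {p : ℕ} (hp : p + 2 ≤ #T) (a x : K) :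
    divDiff T (fun t => (a - t * x) ^ p) = 0 := by
  have hdeg : ((C a - X * C x) ^ p).natDegree ≤ p := by compute_degree
  rw [← divDiff_eval_eq_zero (T := T) (P := (C a - X * C x) ^ p) (by omega)]
  exact divDiff_congr fun t _ => by simp only [eval_pow, eval_sub, eval_C, eval_mul, eval_X]

theorem divDiff_one_sub_mul_pow_div_self {T : Finset K} (h0 : (0 : K) ∉ T) {p : ℕ}
    (hp : p < #T) (x : K) : divDiff T (fun t => (1 - t * x) ^ p / t) = (∏ t ∈ T, t)⁻¹ := by
  have hvanish := divDiff_sub_mul_pow_eq_zero (T := insert 0 T) (p := p)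
    (by rw [card_insert_of_notMem h0]; omega) 1 x
  have hneg : divDiff T (fun t => (1 - t * x) ^ p / (0 - t)) =
      -divDiff T (fun t => (1 - t * x) ^ p / t) := by
    rw [← neg_one_mul, ← divDiff_const_mul]
    exact divDiff_congr fun t _ => by rw [zero_sub, div_neg, neg_one_mul]
  rw [divDiff_insert h0, hneg] at hvanish
  simp only [zero_mul, sub_zero, one_pow, one_div] at hvanish
  linear_combination -hvanish

end DividedDifference

section TruncatedPower

variable {K : Type*} [Field K] [LinearOrder K]

-- `(s - t)₊^p`, read as the indicator of `t < s` when `p = 0`, so that `truncPow_succ` holds.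
def truncPow (p : ℕ) (s t : K) : K := if t < s then (s - t) ^ p else 0

theorem truncPow_succ (p : ℕ) (s t : K) : truncPow (p + 1) s t = (s - t) * truncPow p s t := by
  unfold truncPow
  split_ifs <;> ring

variable [IsStrictOrderedRing K]

theorem truncPow_mul_mul (p : ℕ) {c : K} (hc : 0 < c) (s t : K) :
    truncPow p (c * s) (c * t) = c ^ p * truncPow p s t := by
  simp only [truncPow, mul_lt_mul_iff_right₀ hc, ← mul_sub, mul_pow]
  split_ifs <;> simp

theorem abs_sub_mul_sub_pow (p : ℕ) (s t : K) :
    |s - t| * (s - t) ^ p = 2 * truncPow (p + 1) s t - (s - t) ^ (p + 1) := by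
  unfold truncPow
  split_ifs with h
  · rw [abs_of_pos (sub_pos.2 h)]; ring
  · rw [abs_of_nonpos (sub_nonpos.2 (not_lt.1 h))]; ring

variable [DecidableEq K]

theorem divDiff_truncPow_nonneg (s : K) :
    ∀ (p : ℕ) {T : Finset K}, #T = p + 2 → 0 ≤ divDiff T (truncPow p s)
  | 0, T, hT => by
    obtain ⟨a, b, hab, rfl⟩ := card_eq_two.1 hT
    wlog hlt : a < b generalizing a b
    · rw [pair_comm]
      exact this b a hab.symm (by rwa [pair_comm]) (lt_of_le_of_ne (not_lt.1 hlt) hab.symm)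
    have hrec := sub_mul_divDiff (mem_insert_self a {b})
      (mem_insert_of_mem (mem_singleton_self b)) (truncPow 0 s)
    rw [erase_insert_of_ne hab, erase_singleton, insert_empty,
      erase_insert (notMem_singleton.2 hab), divDiff_singleton, divDiff_singleton] at hrec
    have hanti : truncPow 0 s b ≤ truncPow 0 s a := by
      simp only [truncPow, pow_zero]
      split_ifs <;> norm_num
      linarith
    exact nonneg_of_mul_nonneg_right (hrec ▸ sub_nonneg.2 hanti) (sub_pos.2 hlt)
  | p + 1, T, hT => by
    have hne : T.Nonempty := card_pos.1 (by omega)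
    have ha := T.min'_mem hne
    have hb := T.max'_mem hne
    set a := T.min' hne
    set b := T.max' hne
    rcases le_or_gt s a with hsa | has
    · rw [divDiff_congr (g := fun _ => 0) fun t ht =>
        by rw [truncPow, if_neg (not_lt.2 (hsa.trans (T.min'_le t ht)))]]
      simp [divDiff]
    rcases lt_or_ge b s with hbs | hsb
    · rw [divDiff_congr (g := fun t => (s - t * 1) ^ (p + 1)) fun t ht =>
        by rw [truncPow, if_pos ((T.le_max' t ht).trans_lt hbs), mul_one]]
      exact (divDiff_sub_mul_pow_eq_zero (by omega) s 1).ge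
    have hpull := divDiff_sub_mul ha s (truncPow p s)
    have hrec := sub_mul_divDiff ha hb (truncPow p s)
    have hsucc : (fun t => (s - t) * truncPow p s t) = truncPow (p + 1) s :=
      funext fun t => (truncPow_succ p s t).symm
    rw [hsucc] at hpull
    have hcard : ∀ c ∈ T, #(T.erase c) = p + 2 := fun c hc => by rw [card_erase_of_mem hc]; omega
    have hcomb : (b - a) * divDiff T (truncPow (p + 1) s) =
        (s - a) * divDiff (T.erase b) (truncPow p s) +
          (b - s) * divDiff (T.erase a) (truncPow p s) := by
      linear_combination (b - a) * hpull + (s - a) * hrec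
    refine nonneg_of_mul_nonneg_right (hcomb ▸ add_nonneg ?_ ?_) (sub_pos.2 (has.trans_le hsb))
    · exact mul_nonneg (sub_nonneg.2 has.le) (divDiff_truncPow_nonneg s p (hcard b hb))
    · exact mul_nonneg (sub_nonneg.2 hsb) (divDiff_truncPow_nonneg s p (hcard a ha))

end TruncatedPower

section AbsPowDivDiff

theorem hasDerivAt_abs_mul_pow (p : ℕ) (u : ℝ) :
    HasDerivAt (fun v => |v| * v ^ (p + 1)) ((p + 2) * (|u| * u ^ p)) u := by
  have off : ∀ v ≠ (0 : ℝ),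
      HasDerivAt (fun v => |v| * v ^ (p + 1)) ((p + 2) * (|v| * v ^ p)) v := by
    intro v hv
    refine ((hasDerivAt_abs hv).mul (hasDerivAt_pow (p + 1) v)).congr_deriv ?_
    rw [pow_succ, mul_comm (v ^ p) v, ← mul_assoc, sign_mul_self, Nat.add_sub_cancel]
    push_cast
    ring
  rcases eq_or_ne u 0 with rfl | hu
  · exact hasDerivAt_of_hasDerivAt_of_ne off (by fun_prop) (by fun_prop)
  · exact off u hu

theorem HasDerivAt.divDiff {T : Finset ℝ} {f : ℝ → ℝ → ℝ} {f' : ℝ → ℝ} {x : ℝ}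
    (h : ∀ t ∈ T, HasDerivAt (f t) (f' t) x) :
    HasDerivAt (fun y => divDiff T fun t => f t y) (divDiff T f') x := by
  unfold _root_.divDiff
  exact HasDerivAt.fun_sum fun t ht => (h t ht).div_const _

noncomputable def absPowDivDiff (T : Finset ℝ) (p : ℕ) (x : ℝ) : ℝ :=
  divDiff T fun t => |1 - t * x| * (1 - t * x) ^ p

variable {T : Finset ℝ} {p : ℕ}

theorem continuous_absPowDivDiff : Continuous (absPowDivDiff T p) := by
  unfold absPowDivDiff divDiff
  fun_prop

theorem absPowDivDiff_eq_two_mul_divDiff_truncPow (hT : #T = p + 3) (x : ℝ) :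
    absPowDivDiff T p x = 2 * divDiff T fun t => truncPow (p + 1) 1 (t * x) := by
  rw [absPowDivDiff, divDiff_congr fun t _ => abs_sub_mul_sub_pow p 1 (t * x), divDiff_sub,
    divDiff_const_mul, divDiff_sub_mul_pow_eq_zero (by omega), sub_zero]

theorem absPowDivDiff_eq_zero_of_lt_one (hT : #T = p + 3) {x : ℝ} (hx : ∀ t ∈ T, t * x < 1) :
    absPowDivDiff T p x = 0 := by
  rw [absPowDivDiff,
    divDiff_congr fun t ht => by rw [abs_of_pos (sub_pos.2 (hx t ht)), ← pow_succ'],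
    divDiff_sub_mul_pow_eq_zero (by omega)]

theorem absPowDivDiff_eq_zero_of_one_lt (hT : #T = p + 3) {x : ℝ} (hx : ∀ t ∈ T, 1 < t * x) :
    absPowDivDiff T p x = 0 := by
  rw [absPowDivDiff, divDiff_congr (g := fun t => -1 * (1 - t * x) ^ (p + 1)) fun t ht => by
      rw [abs_of_neg (sub_neg.2 (hx t ht)), pow_succ']; ring,
    divDiff_const_mul, divDiff_sub_mul_pow_eq_zero (by omega), mul_zero]

theorem absPowDivDiff_nonneg (hpos : ∀ t ∈ T, 0 < t) (hT : #T = p + 3) (x : ℝ) :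
    0 ≤ absPowDivDiff T p x := by
  rcases le_or_gt x 0 with hx | hx
  · exact (absPowDivDiff_eq_zero_of_lt_one hT fun t ht =>
      (mul_nonpos_of_nonneg_of_nonpos (hpos t ht).le hx).trans_lt one_pos).ge
  have hscale : ∀ t ∈ T, truncPow (p + 1) 1 (t * x) = x ^ (p + 1) * truncPow (p + 1) x⁻¹ t :=
    fun t _ => by rw [← truncPow_mul_mul _ hx, mul_inv_cancel₀ hx.ne', mul_comm t]
  rw [absPowDivDiff_eq_two_mul_divDiff_truncPow hT, divDiff_congr hscale, divDiff_const_mul]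
  exact mul_nonneg zero_le_two
    (mul_nonneg (by positivity) (divDiff_truncPow_nonneg _ _ (by omega)))

theorem absPowDivDiff_eq_zero_of_notMem_Icc {a b : ℝ} (ha : 0 < a) (hlo : ∀ t ∈ T, a ≤ t)
    (hhi : ∀ t ∈ T, t ≤ b) (hT : #T = p + 3) {x : ℝ} (hx : x ∉ Set.Icc b⁻¹ a⁻¹) :
    absPowDivDiff T p x = 0 := by
  rw [Set.mem_Icc, not_and_or, not_le, not_le] at hx
  rcases hx with hx | hx
  · refine absPowDivDiff_eq_zero_of_lt_one hT fun t ht => ?_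
    have ht0 := ha.trans_le (hlo t ht)
    have hb := ht0.trans_le (hhi t ht)
    rcases le_or_gt x 0 with hx0 | hx0
    · nlinarith
    · calc t * x ≤ b * x := mul_le_mul_of_nonneg_right (hhi t ht) hx0.le
        _ < b * b⁻¹ := mul_lt_mul_of_pos_left hx hb
        _ = 1 := mul_inv_cancel₀ hb.ne'
  · refine absPowDivDiff_eq_zero_of_one_lt hT fun t ht => ?_
    calc 1 = a * a⁻¹ := (mul_inv_cancel₀ ha.ne').symm
      _ < a * x := mul_lt_mul_of_pos_left hx ha
      _ ≤ t * x := mul_le_mul_of_nonneg_right (hlo t ht) ((inv_pos.2 ha).trans hx).le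

theorem integral_absPowDivDiff {a b : ℝ} (ha : 0 < a) (hlo : ∀ t ∈ T, a ≤ t)
    (hhi : ∀ t ∈ T, t ≤ b) (hT : #T = p + 3) :
    ∫ x, absPowDivDiff T p x = 2 / ((p + 2) * ∏ t ∈ T, t) := by
  have hpos : ∀ t ∈ T, 0 < t := fun t ht => ha.trans_le (hlo t ht)
  have h0 : (0 : ℝ) ∉ T := fun h => lt_irrefl 0 (hpos 0 h)
  obtain ⟨t₀, ht₀⟩ : T.Nonempty := card_pos.1 (by omega)
  have hb : 0 < b := (hpos t₀ ht₀).trans_le (hhi t₀ ht₀)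
  have hab : b⁻¹ ≤ a⁻¹ := inv_anti₀ ha ((hlo t₀ ht₀).trans (hhi t₀ ht₀))
  set G : ℝ → ℝ := fun x => divDiff T fun t => |1 - t * x| * (1 - t * x) ^ (p + 1) / t
  have hG : ∀ x, HasDerivAt G (-(p + 2) * absPowDivDiff T p x) x := fun x => by
    rw [absPowDivDiff, ← divDiff_const_mul]
    refine HasDerivAt.divDiff fun t ht => ?_
    have hin : HasDerivAt (fun y => 1 - t * y) (-t) x := by
      simpa using ((hasDerivAt_id x).const_mul t).const_sub 1
    refine (((hasDerivAt_abs_mul_pow p (1 - t * x)).comp x hin).div_const t).congr_deriv ?_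
    field_simp [(hpos t ht).ne']
  have hGb : G b⁻¹ = (∏ t ∈ T, t)⁻¹ := by
    rw [← divDiff_one_sub_mul_pow_div_self h0 (p := p + 2) (by omega) b⁻¹]
    refine divDiff_congr fun t ht => ?_
    have : 0 ≤ 1 - t * b⁻¹ := by
      rw [sub_nonneg, ← div_eq_mul_inv, div_le_one hb]; exact hhi t ht
    rw [abs_of_nonneg this, ← pow_succ']
  have hGa : G a⁻¹ = -(∏ t ∈ T, t)⁻¹ := by
    rw [← divDiff_one_sub_mul_pow_div_self h0 (p := p + 2) (by omega) a⁻¹, ← neg_one_mul,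
      ← divDiff_const_mul]
    refine divDiff_congr fun t ht => ?_
    have : 1 - t * a⁻¹ ≤ 0 := by
      rw [sub_nonpos, ← div_eq_mul_inv, one_le_div ha]; exact hlo t ht
    rw [abs_of_nonpos this, pow_succ' _ (p + 1)]
    ring
  have hFTC := intervalIntegral.integral_eq_sub_of_hasDerivAt (fun x _ => hG x)
    ((continuous_const.mul continuous_absPowDivDiff).intervalIntegrable b⁻¹ a⁻¹)
  rw [intervalIntegral.integral_const_mul, hGa, hGb, intervalIntegral.integral_of_le hab,
    ← integral_Icc_eq_integral_Ioc, setIntegral_eq_integral_of_forall_compl_eq_zero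
      fun x hx => absPowDivDiff_eq_zero_of_notMem_Icc ha hlo hhi hT hx] at hFTC
  have hprod : (∏ t ∈ T, t) ≠ 0 := prod_ne_zero_iff.2 fun t ht => (hpos t ht).ne'
  rw [eq_div_iff (mul_ne_zero (by positivity) hprod)]
  linear_combination (-∏ t ∈ T, t) * hFTC + 2 * mul_inv_cancel₀ hprod

end AbsPowDivDiff

/-- The density `F` from Theorem 2 is a probability density function supported on
`[1/n_k, 1/n₁]`: it is nonnegative, vanishes off `[1/n_k, 1/n₁]`, and integrates to `1`. -/
theorem density_is_pdf
    (k : ℕ) (hk : 3 ≤ k) (n : Fin k → ℕ) (hpos : ∀ j, 0 < n j) (hmono : StrictMono n)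
    (F : ℝ → ℝ)
    (hF : ∀ x : ℝ, F x = ((k - 1 : ℝ) * ∏ j, (n j : ℝ)) / 2 *
      ∑ r, |1 - (n r : ℝ) * x| * (1 - (n r : ℝ) * x) ^ (k - 3) /
        ∏ j ∈ Finset.univ.erase r, ((n j : ℝ) - (n r : ℝ))) :
    (∀ x : ℝ, 0 ≤ F x) ∧
    (∀ x : ℝ, x ∉ Set.Icc ((n ⟨k - 1, by omega⟩ : ℝ))⁻¹ ((n ⟨0, by omega⟩ : ℝ))⁻¹ → F x = 0) ∧
    (∫ t : ℝ, F t) = 1 := by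
  have hinj : Function.Injective fun j => (n j : ℝ) := fun i j h =>
    hmono.injective (Nat.cast_injective h)
  set T := univ.image fun j => (n j : ℝ)
  have hT : #T = (k - 3) + 3 := by
    rw [card_image_of_injective _ hinj, card_univ, Fintype.card_fin]; omega
  have hlo : ∀ t ∈ T, (n ⟨0, by omega⟩ : ℝ) ≤ t := fun t ht => by
    obtain ⟨j, -, rfl⟩ := mem_image.1 ht
    exact_mod_cast hmono.monotone (by simp only [Fin.le_def]; omega)
  have hhi : ∀ t ∈ T, t ≤ (n ⟨k - 1, by omega⟩ : ℝ) := fun t ht => by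
    obtain ⟨j, -, rfl⟩ := mem_image.1 ht
    exact_mod_cast hmono.monotone (by simp only [Fin.le_def]; omega)
  have hmin : (0 : ℝ) < n ⟨0, by omega⟩ := by exact_mod_cast hpos _
  have hF' : ∀ x, F x = ((k - 3 : ℕ) + 2) * (∏ t ∈ T, t) / 2 * absPowDivDiff T (k - 3) x := by
    intro x
    rw [hF x, absPowDivDiff, divDiff_image _ hinj, prod_image hinj.injOn, Nat.cast_sub hk]
    ring
  have hnodes : ∀ t ∈ T, 0 < t := fun t ht => hmin.trans_le (hlo t ht)
  have hprod : 0 < ∏ t ∈ T, t := prod_pos hnodes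
  refine ⟨fun x => ?_, fun x hx => ?_, ?_⟩
  · rw [hF']
    exact mul_nonneg (by positivity) (absPowDivDiff_nonneg hnodes hT x)
  · rw [hF', absPowDivDiff_eq_zero_of_notMem_Icc hmin hlo hhi hT hx, mul_zero]
  · simp_rw [hF']
    rw [integral_const_mul, integral_absPowDivDiff hmin hlo hhi hT]
    field_simp
end

section
/- Let x₁, …, x_k be complex numbers and let p ≥ 0 be an integer. For every complex number w with w·x_b ≠ 1 for all b ∈ {1,…,k}, the p-th derivative at w of the function u ↦ ∏_{b=1}^k (1 − u·x_b)^{−1} equals p! · (∏_{b=1}^k (1 − w·x_b)^{−1}) · h_p(x₁/(1 − w·x₁), x₂/(1 − w·x₂), …, x_k/(1 − w·x_k)). -/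
open Finset
open scoped Classical

/-- The complete homogeneous symmetric polynomial `h_p` evaluated at `x 0, …, x (k-1)`:
the sum of all monomials of degree `p` (with `h₀ = 1`). -/
def CompleteHomogeneous {R : Type*} [CommRing R] (k p : ℕ) (x : Fin k → R) : R :=
  ∑ d ∈ (Fintype.piFinset fun _ : Fin k => Finset.range (p + 1)).filter
      (fun d => ∑ j, d j = p), ∏ j, x j ^ d j

/-!
Induct on the number of factors. Leibniz's rule splits off one factor `(1 - u c)⁻¹`, whose
`j`-th derivative at `w` is `j! (1 - w c)⁻¹ (c / (1 - w c)) ^ j`. The binomial coefficients cancel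
against the factorials, and what remains is the recursion
`h_p(y₀, y') = ∑_{i + j = p} y₀ ^ i h_j(y')` of complete homogeneous polynomials, evaluated at
`y_b = x_b / (1 - w x_b)`.
-/

open scoped Nat

section
variable {ι R : Type*} [DecidableEq ι] [CommSemiring R]

def completeHomogeneousOn (s : Finset ι) (p : ℕ) (y : ι → R) : R :=
  ∑ d ∈ piAntidiag s p, ∏ b ∈ s, y b ^ d b

variable (p : ℕ) (y : ι → R)

theorem completeHomogeneousOn_empty :
    completeHomogeneousOn ∅ p y = if p = 0 then 1 else 0 := by
  rw [completeHomogeneousOn, piAntidiag_empty]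
  split_ifs <;> simp

theorem completeHomogeneousOn_cons {s : Finset ι} {i : ι} (hi : i ∉ s) :
    completeHomogeneousOn (cons i s hi) p y =
      ∑ ab ∈ antidiagonal p, y i ^ ab.1 * completeHomogeneousOn s ab.2 y := by
  rw [completeHomogeneousOn, piAntidiag_cons, sum_disjiUnion]
  refine sum_congr rfl fun ab _ => ?_
  rw [sum_map, completeHomogeneousOn, mul_sum]
  refine sum_congr rfl fun d hd => ?_
  have hdi : d i = 0 := by
    by_contra h
    exact hi ((mem_piAntidiag.1 hd).2 i h)
  have hs : ∀ b ∈ s, b ≠ i := fun b hb h => hi (h ▸ hb)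
  simp only [addRightEmbedding_apply, prod_cons, Pi.add_apply, hdi, zero_add]
  congr 1
  exact prod_congr rfl fun b hb => by simp [hs b hb]

end

theorem completeHomogeneous_eq_completeHomogeneousOn {R : Type*} [CommRing R] (k p : ℕ)
    (y : Fin k → R) :
    CompleteHomogeneous k p y = completeHomogeneousOn univ p y := by
  rw [CompleteHomogeneous, completeHomogeneousOn]
  congr 1
  ext d
  simp only [mem_filter, Fintype.mem_piFinset, mem_range, mem_piAntidiag, mem_univ,
    implies_true, and_true, and_iff_right_iff_imp, Nat.lt_succ_iff]
  rintro rfl j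
  exact single_le_sum (fun _ _ => Nat.zero_le _) (mem_univ j)

section
variable {𝕜 : Type*} [NontriviallyNormedField 𝕜]

theorem iteratedDeriv_inv_one_sub_mul (n : ℕ) (c w : 𝕜) :
    iteratedDeriv n (fun u => (1 - u * c)⁻¹) w =
      n ! * (1 - w * c)⁻¹ * (c / (1 - w * c)) ^ n := by
  have h := congr_fun (iter_deriv_inv_linear n (-c) 1) w
  simp only [neg_mul, neg_add_eq_sub, mul_comm c] at h
  have hsign : (-1 : 𝕜) ^ n * (-c) ^ n = c ^ n := by rw [← mul_pow]; simp
  rw [iteratedDeriv_eq_iterate, h, show (-1 - n : ℤ) = -((n + 1 : ℕ) : ℤ) by push_cast; ring,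
    zpow_neg, zpow_natCast, pow_succ', mul_inv, div_pow, div_eq_mul_inv]
  linear_combination (n ! * (1 - w * c)⁻¹ * ((1 - w * c) ^ n)⁻¹ : 𝕜) * hsign

theorem contDiffAt_inv_one_sub_mul (n : WithTop ℕ∞) {c w : 𝕜} (h : w * c ≠ 1) :
    ContDiffAt 𝕜 n (fun u => (1 - u * c)⁻¹) w :=
  (contDiffAt_const.sub (contDiffAt_id.mul contDiffAt_const)).inv (sub_ne_zero.2 h.symm)

theorem iteratedDeriv_finset_prod_inv_one_sub {ι : Type*} [DecidableEq ι] (s : Finset ι)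
    (x : ι → 𝕜) (p : ℕ) {w : 𝕜} (hw : ∀ b ∈ s, w * x b ≠ 1) :
    iteratedDeriv p (fun u => ∏ b ∈ s, (1 - u * x b)⁻¹) w =
      p ! * (∏ b ∈ s, (1 - w * x b)⁻¹) *
        completeHomogeneousOn s p (fun b => x b / (1 - w * x b)) := by
  induction s using Finset.cons_induction generalizing p with
  | empty =>
    rw [completeHomogeneousOn_empty]
    split_ifs with hp <;> simp [iteratedDeriv_const, hp]
  | cons i s hi ih =>
    rw [forall_mem_cons] at hw
    have hsplit : (fun u => ∏ b ∈ cons i s hi, (1 - u * x b)⁻¹) =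
        (fun u => (1 - u * x i)⁻¹) * fun u => ∏ b ∈ s, (1 - u * x b)⁻¹ := by
      ext u; rw [Pi.mul_apply, prod_cons]
    rw [hsplit, iteratedDeriv_mul (contDiffAt_inv_one_sub_mul _ hw.1)
      (contDiffAt_prod fun b hb => contDiffAt_inv_one_sub_mul _ (hw.2 b hb)),
      completeHomogeneousOn_cons, prod_cons, Nat.sum_antidiagonal_eq_sum_range_succ_mk, mul_sum]
    refine sum_congr rfl fun j hj => ?_
    have hchoose : (p.choose j * j ! * (p - j)! : 𝕜) = p ! := by
      rw [← Nat.cast_mul, ← Nat.cast_mul,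
        Nat.choose_mul_factorial_mul_factorial (Nat.lt_succ_iff.1 (mem_range.1 hj))]
    rw [iteratedDeriv_inv_one_sub_mul, ih _ hw.2]
    linear_combination ((1 - w * x i)⁻¹ * (∏ b ∈ s, (1 - w * x b)⁻¹) * (x i / (1 - w * x i)) ^ j *
      completeHomogeneousOn s (p - j) (fun b => x b / (1 - w * x b))) * hchoose

end

/-- The `p`-th derivative of `u ↦ ∏_b (1 - u x_b)⁻¹` at a point `w` with `w x_b ≠ 1` for
all `b` equals `p! (∏_b (1 - w x_b)⁻¹) · h_p(x₁/(1-w x₁), …, x_k/(1-w x_k))`. -/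
theorem iteratedDeriv_prod_inv_one_sub
    (k p : ℕ) (x : Fin k → ℂ) (w : ℂ) (hw : ∀ b, w * x b ≠ 1) :
    iteratedDeriv p (fun u : ℂ => ∏ b, (1 - u * x b)⁻¹) w =
      (p.factorial : ℂ) * (∏ b, (1 - w * x b)⁻¹) *
        CompleteHomogeneous k p (fun b => x b / (1 - w * x b)) := by
  rw [completeHomogeneous_eq_completeHomogeneousOn]
  exact iteratedDeriv_finset_prod_inv_one_sub univ x p fun b _ => hw b
end

section
/- Let n₁ < n₂ < ⋯ < n_k be distinct positive integers with gcd(n₁,…,n_k) = 1, let δ = gcd(n₂ − n₁, …, n_k − n_{k−1}), fix an integer N ≥ 1, set m = gcd(δ, N), let ω = e^{2πi/N} ∈ ℂ, and let Γ = {t ∈ ℤ/Nℤ : n₁·t = n₂·t = ⋯ = n_k·t in ℤ/Nℤ}. Then for all integers i and n: Σ over t ∈ Γ of ω^{(i·n₁ − n)·t} equals m if n ≡ i·n₁ (mod m), and equals 0 if n ≢ i·n₁ (mod m). (Here the exponent (i·n₁ − n)·t is well defined since ω^N = 1.) -/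
open Finset
open scoped Classical

/-!
The condition `n₁ t = ⋯ = n_k t` only involves the consecutive differences, so `Γ` is the set of
`t` with `N ∣ δ t`, i.e. the multiples of `q = N / m`; it has `m` elements. Since `ω ^ q` is a
primitive `m`-th root of unity, the sum is a complete geometric sum over the `m`-th roots of
unity, which is `m` or `0` according as `m` divides the exponent or not.
-/

theorem Fin.forall_eq_apply_zero_iff_forall_succ_eq {α : Type*} {k : ℕ} (hk : 0 < k) (f : Fin k → α) :
    (∀ j, f j = f ⟨0, hk⟩) ↔
      ∀ j : Fin (k - 1), f ⟨j + 1, by omega⟩ = f ⟨j, by omega⟩ := by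
  refine ⟨fun h j => (h _).trans (h _).symm, fun h => ?_⟩
  rintro ⟨j, hj⟩
  induction j with
  | zero => rfl
  | succ j ih => exact (h ⟨j, by omega⟩).trans (ih (by omega))

theorem ZMod.natCast_mul_eq_natCast_mul_iff_dvd {N a b : ℕ} (hba : b ≤ a) (t : ℕ) :
    (a : ZMod N) * t = b * t ↔ N ∣ (a - b) * t := by
  rw [← sub_eq_zero, ← sub_mul, ← Nat.cast_sub hba, ← Nat.cast_mul, ZMod.natCast_eq_zero_iff]

theorem Nat.dvd_mul_iff_div_gcd_dvd {N : ℕ} (hN : N ≠ 0) (d t : ℕ) :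
    N ∣ d * t ↔ N / d.gcd N ∣ t := by
  have hg : 0 < d.gcd N := Nat.gcd_pos_of_pos_right d (Nat.pos_of_ne_zero hN)
  calc N ∣ d * t ↔ N / d.gcd N * d.gcd N ∣ d / d.gcd N * t * d.gcd N := by
        rw [Nat.div_mul_cancel (Nat.gcd_dvd_right d N), mul_right_comm,
          Nat.div_mul_cancel (Nat.gcd_dvd_left d N)]
    _ ↔ N / d.gcd N ∣ d / d.gcd N * t := Nat.mul_dvd_mul_iff_right hg
    _ ↔ N / d.gcd N ∣ t := (Nat.coprime_div_gcd_div_gcd hg).symm.dvd_mul_left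

theorem Finset.sum_range_mul_filter_dvd {M : Type*} [AddCommMonoid M] {q : ℕ} (hq : 0 < q)
    (m : ℕ) (f : ℕ → M) :
    ∑ t ∈ range (m * q) with q ∣ t, f t = ∑ s ∈ range m, f (s * q) := by
  symm
  refine sum_nbij' (· * q) (· / q) ?_ ?_ (fun s _ => Nat.mul_div_cancel s hq) ?_ (fun _ _ => rfl)
  · intro s hs
    simp only [mem_filter, mem_range] at hs ⊢
    exact ⟨Nat.mul_lt_mul_of_pos_right hs hq, dvd_mul_left q s⟩
  · intro t ht
    simp only [mem_filter, mem_range] at ht ⊢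
    exact Nat.div_lt_of_lt_mul (by rw [mul_comm]; exact ht.1)
  · intro t ht
    exact Nat.div_mul_cancel (mem_filter.1 ht).2

theorem IsPrimitiveRoot.sum_range_zpow_mul {K : Type*} [Field K] {ζ : K} {m : ℕ}
    (hζ : IsPrimitiveRoot ζ m) (a : ℤ) :
    ∑ s ∈ range m, ζ ^ (a * s) = if (m : ℤ) ∣ a then (m : K) else 0 := by
  simp_rw [zpow_mul, zpow_natCast]
  split_ifs with ha
  · simp [(hζ.zpow_eq_one_iff_dvd a).2 ha]
  · have hm : (ζ ^ a) ^ m = 1 := by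
      rw [← zpow_natCast, ← zpow_mul, mul_comm, zpow_mul, hζ.zpow_eq_one, one_zpow]
    rw [geom_sum_eq (mt (hζ.zpow_eq_one_iff_dvd a).1 ha), hm, sub_self, zero_div]

theorem forall_natCast_mul_eq_iff_div_gcd_dvd {k : ℕ} (hk : 0 < k) {n : Fin k → ℕ}
    (hn : Monotone n) {N : ℕ} (hN : N ≠ 0) (t : ℕ) :
    (∀ j, (n j : ZMod N) * t = n ⟨0, hk⟩ * t) ↔
      N / (univ.gcd fun j : Fin (k - 1) => n ⟨j + 1, by omega⟩ - n ⟨j, by omega⟩).gcd N ∣ t := by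
  rw [Fin.forall_eq_apply_zero_iff_forall_succ_eq hk (fun j => (n j : ZMod N) * t),
    ← Nat.dvd_mul_iff_div_gcd_dvd hN, ← (Finset.gcd_mul_right' _ _ t).dvd_iff_dvd_right,
    Finset.dvd_gcd_iff]
  simp only [mem_univ, true_implies]
  exact forall_congr' fun j =>
    ZMod.natCast_mul_eq_natCast_mul_iff_dvd (hn (by simp [Fin.le_def])) t

/-- **An exponential sum.**  With `ω = e^{2πi/N}` and
`Γ = {t ∈ ℤ/Nℤ : n₁t = ⋯ = n_kt}`, for all integers `i` and `n`:
`Σ_{t ∈ Γ} ω^{(i n₁ - n) t} = m` if `n ≡ i n₁ (mod m)` and `= 0` otherwise, where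
`m = gcd(δ, N)`.  (The elements of `Γ` are enumerated by their representatives
`t ∈ {0, …, N-1}`; the exponent is well defined since `ω^N = 1`.) -/
theorem exponential_sum_over_Gamma
    (k : ℕ) (hk : 1 ≤ k) (n : Fin k → ℕ) (hmono : StrictMono n)
    (δ : ℕ)
    (hδ : δ = Finset.univ.gcd (fun j : Fin (k - 1) =>
      n ⟨j.val + 1, by have := j.isLt; omega⟩ - n ⟨j.val, by have := j.isLt; omega⟩))
    (N : ℕ) (hN : 1 ≤ N) (m : ℕ) (hm : m = Nat.gcd δ N)
    (ω : ℂ) (hω : ω = Complex.exp (2 * Real.pi * Complex.I / N))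
    (i x : ℤ) :
    (∑ t ∈ (Finset.range N).filter
        (fun t : ℕ => ∀ j : Fin k,
          (n j : ZMod N) * (t : ZMod N) = (n ⟨0, by omega⟩ : ZMod N) * (t : ZMod N)),
        ω ^ ((i * (n ⟨0, by omega⟩ : ℤ) - x) * (t : ℤ))) =
      if x ≡ i * (n ⟨0, by omega⟩ : ℤ) [ZMOD m] then (m : ℂ) else 0 := by
  have hN0 : N ≠ 0 := by omega
  have hmN : m ∣ N := hm ▸ Nat.gcd_dvd_right δ N
  set q := N / m
  have hNq : N = m * q := (Nat.mul_div_cancel' hmN).symm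
  have hq : 0 < q := Nat.pos_of_ne_zero fun h => hN0 (by rw [hNq, h, mul_zero])
  have hζ : IsPrimitiveRoot (ω ^ q) m :=
    (hω ▸ Complex.isPrimitiveRoot_exp N hN0).pow (Nat.pos_of_ne_zero hN0) (by rw [hNq, mul_comm])
  have hΓ : ∀ t ∈ range N, (∀ j : Fin k, (n j : ZMod N) * t = n ⟨0, by omega⟩ * t) ↔ q ∣ t :=
    fun t _ => by rw [forall_natCast_mul_eq_iff_div_gcd_dvd _ hmono.monotone hN0 t, ← hδ, ← hm]
  rw [filter_congr hΓ, if_congr Int.modEq_iff_dvd rfl rfl, ← hζ.sum_range_zpow_mul]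
  conv_lhs => rw [hNq, sum_range_mul_filter_dvd hq]
  refine sum_congr rfl fun s _ => ?_
  rw [← zpow_natCast, ← zpow_mul]
  push_cast
  ring_nf
end
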